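/- arXiv:2110.06451 — 2 statements merged into one kernel-verified Lean document; each statement's English description precedes it below -/
import Mathlib

section
/- Let q be a probability density on ℝ^m such that u ↦ q(u)·c(u) and u ↦ q(u)·log q(u) are Lebesgue integrable and ∫ q(u) c(u) du + α ∫ q(u) log q(u) du = -α · log Z. Then q(u) = Z⁻¹ exp(-c(u)/α) for Lebesgue-almost every u; i.e., the Gibbs density is the unique minimizer of the entropy-regularized objective. -/
open MeasureTheory

lemma gibbs_aux_nonneg (a b : ℝ) (ha : 0 ≤ a) (hb : 0 < b) :
    0 ≤ a * Real.log a - a * Real.log b - (a - b) := by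
  rcases ha.eq_or_lt with h | h
  · simp [← h]; linarith
  · have hlog := Real.log_le_sub_one_of_pos (div_pos hb h)
    rw [Real.log_div hb.ne' h.ne'] at hlog
    have := mul_le_mul_of_nonneg_left hlog h.le
    have hba : a * (b / a - 1) = b - a := by field_simp
    nlinarith

lemma gibbs_aux_eq (a b : ℝ) (ha : 0 ≤ a) (hb : 0 < b)
    (h : a * Real.log a - a * Real.log b - (a - b) = 0) : a = b := by
  rcases ha.eq_or_lt with h0 | h0
  · exfalso; rw [← h0] at h; simp at h; linarith
  · by_contra hne
    have hba : b / a ≠ 1 := by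
      intro h1
      exact hne ((div_eq_one_iff_eq h0.ne').mp h1).symm
    have hlog := Real.log_lt_sub_one_of_pos (div_pos hb h0) hba
    rw [Real.log_div hb.ne' h0.ne'] at hlog
    have := mul_lt_mul_of_pos_left hlog h0
    have hba2 : a * (b / a - 1) = b - a := by field_simp
    nlinarith

/-- The Gibbs density is the unique minimizer of the entropy-regularized
objective: any probability density attaining the value `-α log Z` coincides
almost everywhere with `Z⁻¹ exp (-c u / α)`. -/
theorem gibbs_unique_minimizer {m : ℕ} (α : ℝ) (hα : 0 < α)
    (c : (Fin m → ℝ) → ℝ) (hc : Measurable c)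
    (hZint : Integrable (fun u : Fin m → ℝ => Real.exp (-c u / α)))
    (hZpos : 0 < ∫ u : Fin m → ℝ, Real.exp (-c u / α))
    (q : (Fin m → ℝ) → ℝ) (hq : Measurable q) (hq0 : ∀ u, 0 ≤ q u)
    (hq1 : (∫ u, q u) = 1)
    (hqc : Integrable (fun u => q u * c u))
    (hql : Integrable (fun u => q u * Real.log (q u)))
    (heq : (∫ u, q u * c u) + α * ∫ u, q u * Real.log (q u)
      = -α * Real.log (∫ u : Fin m → ℝ, Real.exp (-c u / α))) :
    ∀ᵐ u : Fin m → ℝ, q u = (∫ v : Fin m → ℝ, Real.exp (-c v / α))⁻¹ * Real.exp (-c u / α) := by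
  set Z : ℝ := ∫ u : Fin m → ℝ, Real.exp (-c u / α) with hZ
  set p : (Fin m → ℝ) → ℝ := fun u => Z⁻¹ * Real.exp (-c u / α) with hp
  have hppos : ∀ u, 0 < p u := fun u =>
    mul_pos (inv_pos.mpr hZpos) (Real.exp_pos _)
  have hintq : Integrable q := by
    by_contra h
    rw [integral_undef h] at hq1
    norm_num at hq1
  have hintp : Integrable p := hZint.const_mul _
  have hintP : (∫ u, p u) = 1 := by
    rw [hp, integral_const_mul, inv_mul_cancel₀ hZpos.ne']
  -- log p u = -log Z - c u / α
  have hlogp : ∀ u, Real.log (p u) = -Real.log Z - c u / α := by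
    intro u
    rw [hp]
    rw [Real.log_mul (inv_ne_zero hZpos.ne') (Real.exp_ne_zero _),
      Real.log_inv, Real.log_exp]
    ring
  -- q * log p rewritten
  have hqlp_eq : (fun u => q u * Real.log (p u))
      = fun u => (-Real.log Z) * q u - (1/α) * (q u * c u) := by
    funext u
    rw [hlogp u]
    field_simp
  have hqlp_int : Integrable (fun u => q u * Real.log (p u)) := by
    rw [hqlp_eq]
    exact (hintq.const_mul _).sub (hqc.const_mul _)
  have hqlp_val : (∫ u, q u * Real.log (p u))
      = -Real.log Z - (1/α) * ∫ u, q u * c u := by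
    rw [hqlp_eq, integral_sub (hintq.const_mul _) (hqc.const_mul _),
      integral_const_mul, integral_const_mul, hq1]
    ring
  set g : (Fin m → ℝ) → ℝ :=
    fun u => q u * Real.log (q u) - q u * Real.log (p u) - (q u - p u) with hg
  have hint1 : Integrable (fun u => q u * Real.log (q u) - q u * Real.log (p u)) :=
    hql.sub hqlp_int
  have hint2 : Integrable (fun u => q u - p u) := hintq.sub hintp
  have hgint : Integrable g := hint1.sub hint2
  have hgval : (∫ u, g u) = 0 := by
    simp only [hg]
    rw [integral_sub hint1 hint2, integral_sub hql hqlp_int, integral_sub hintq hintp,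
      hqlp_val, hq1, hintP]
    have h1 : (∫ u, q u * c u) = -α * Real.log Z - α * ∫ u, q u * Real.log (q u) := by
      linarith
    rw [h1]
    field_simp
    ring
  have hgnn : ∀ u, 0 ≤ g u := fun u => gibbs_aux_nonneg _ _ (hq0 u) (hppos u)
  have hg0 : g =ᵐ[volume] 0 := by
    rw [← integral_eq_zero_iff_of_nonneg hgnn hgint]
    exact hgval
  filter_upwards [hg0] with u hu
  exact gibbs_aux_eq _ _ (hq0 u) (hppos u) hu
end

section
/- Define V^{(n)} := -α ln ∫_{ℝ^m} exp(-(V'^{(n)}(g(u)) + l(u))/α) du for each n, and define the log-sum-exp combination V'(y) := -α ln Σ_{n=1}^N exp(-V'^{(n)}(y)/α). Then the integral ∫_{ℝ^m} exp(-(V'(g(u)) + l(u))/α) du is finite and positive, and -α ln ∫_{ℝ^m} exp(-(V'(g(u)) + l(u))/α) du = -α ln Σ_{n=1}^N exp(-V^{(n)}/α). That is, the log-sum-exp combination of value functions is preserved by one step of the maximum entropy Bellman recursion. -/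
open MeasureTheory

/-- The log-sum-exp combination of value functions is preserved by one step of
the maximum entropy Bellman recursion. -/
theorem logSumExp_bellman_step {m d : ℕ} (N : ℕ) (hN : 1 ≤ N) (α : ℝ) (hα : 0 < α)
    (g : (Fin m → ℝ) → (Fin d → ℝ)) (hg : Measurable g)
    (l : (Fin m → ℝ) → ℝ) (hl : Measurable l)
    (Vn' : Fin N → (Fin d → ℝ) → ℝ) (hVn' : ∀ n, Measurable (Vn' n))
    (hint : ∀ n, Integrable (fun u : Fin m → ℝ => Real.exp (-(Vn' n (g u) + l u) / α)))
    (hpos : ∀ n, 0 < ∫ u : Fin m → ℝ, Real.exp (-(Vn' n (g u) + l u) / α)) :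
    Integrable (fun u : Fin m → ℝ =>
      Real.exp (-((-α * Real.log (∑ n, Real.exp (-(Vn' n (g u)) / α))) + l u) / α))
    ∧ 0 < (∫ u : Fin m → ℝ,
      Real.exp (-((-α * Real.log (∑ n, Real.exp (-(Vn' n (g u)) / α))) + l u) / α))
    ∧ -α * Real.log (∫ u : Fin m → ℝ,
        Real.exp (-((-α * Real.log (∑ n, Real.exp (-(Vn' n (g u)) / α))) + l u) / α))
      = -α * Real.log (∑ n, Real.exp
          (-(-α * Real.log (∫ u : Fin m → ℝ, Real.exp (-(Vn' n (g u) + l u) / α))) / α)) := by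
  have hα' : α ≠ 0 := ne_of_gt hα
  haveI : Nonempty (Fin N) := ⟨⟨0, hN⟩⟩
  have key : ∀ u : Fin m → ℝ,
      Real.exp (-((-α * Real.log (∑ n, Real.exp (-(Vn' n (g u)) / α))) + l u) / α)
        = ∑ n, Real.exp (-(Vn' n (g u) + l u) / α) := by
    intro u
    have hS : 0 < ∑ n, Real.exp (-(Vn' n (g u)) / α) :=
      Finset.sum_pos (fun n _ => Real.exp_pos _) Finset.univ_nonempty
    have harg : -((-α * Real.log (∑ n, Real.exp (-(Vn' n (g u)) / α))) + l u) / α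
        = Real.log (∑ n, Real.exp (-(Vn' n (g u)) / α)) + (-(l u) / α) := by
      field_simp; ring
    rw [harg, Real.exp_add, Real.exp_log hS, Finset.sum_mul]
    refine Finset.sum_congr rfl fun n _ => ?_
    rw [← Real.exp_add]
    congr 1
    field_simp
    ring
  have hintS : Integrable (fun u : Fin m → ℝ =>
      Real.exp (-((-α * Real.log (∑ n, Real.exp (-(Vn' n (g u)) / α))) + l u) / α)) := by
    have : Integrable (fun u : Fin m → ℝ => ∑ n, Real.exp (-(Vn' n (g u) + l u) / α)) :=
      integrable_finset_sum _ (fun n _ => hint n)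
    exact this.congr (Filter.Eventually.of_forall fun u => (key u).symm)
  have hIeq : (∫ u : Fin m → ℝ,
      Real.exp (-((-α * Real.log (∑ n, Real.exp (-(Vn' n (g u)) / α))) + l u) / α))
      = ∑ n, ∫ u : Fin m → ℝ, Real.exp (-(Vn' n (g u) + l u) / α) := by
    simp_rw [key]
    exact integral_finset_sum _ (fun n _ => hint n)
  refine ⟨hintS, ?_, ?_⟩
  · rw [hIeq]
    exact Finset.sum_pos (fun n _ => hpos n) Finset.univ_nonempty
  · rw [hIeq]
    congr 2
    refine Finset.sum_congr rfl fun n _ => ?_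
    have : -(-α * Real.log (∫ u : Fin m → ℝ, Real.exp (-(Vn' n (g u) + l u) / α))) / α
        = Real.log (∫ u : Fin m → ℝ, Real.exp (-(Vn' n (g u) + l u) / α)) := by
      field_simp
    rw [this, Real.exp_log (hpos n)]
end
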